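/- Let V ↪ H be Hilbert spaces, E: V×V → ℂ continuous coercive, s ∈ (0,1), and b_s(u,v) = ∫₀^∞ (⟨u'(t),v'(t)⟩_H + E(u(t),v(t))) t^{1-2s} dt on W_{1-s}(H,V). If u ∈ W_{1-s}(H,V) satisfies b_s(u,v) = 0 for all v ∈ C_c^∞((0,∞);V), then t^{1-2s}u' ∈ W_s(V',H) and -(t^{1-2s}u')'(t) + t^{1-2s}𝒜u(t) = 0 in V' for a.e. t, i.e. u is s-harmonic. -/

import Mathlib

open MeasureTheory Set Filter
open scoped ENNReal NNReal

noncomputable section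

/-- The measure `t^γ dt` on `(0,∞)`; with `γ = 2θ-1` this gives the space
`W^θ(Z) = L²((0,∞); Z, t^{2θ-1} dt)`. -/
def wMeasure (γ : ℝ) : Measure ℝ :=
  (volume.restrict (Set.Ioi 0)).withDensity fun t => ENNReal.ofReal (t ^ γ)

/-- `WeakDeriv F G` : `G` is the weak (distributional) derivative of `F` on
`(0,∞)`, tested against scalar test functions `φ ∈ C_c^∞((0,∞))`. -/
def WeakDeriv {E : Type*} [NormedAddCommGroup E] [NormedSpace ℝ E]
    (F G : ℝ → E) : Prop :=
  ∀ φ : ℝ → ℝ, ContDiff ℝ (⊤ : ℕ∞) φ → HasCompactSupport φ → tsupport φ ⊆ Set.Ioi 0 →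
    ∫ t in Set.Ioi (0:ℝ), deriv φ t • F t = -∫ t in Set.Ioi (0:ℝ), φ t • G t

/-- `SHarmonic j e E s u u' w'` : `u` is an `(E,s)`-harmonic function.
Here `j : V ↪ H` is the embedding of the Gelfand triple, `e : H → V'` the pivot
embedding into the antidual `V' = V →L⋆[ℂ] ℂ`, and `E` the sesquilinear form.
It says: `u ∈ W_{1-s}(H,V)` with weak derivative `u'`, the function
`w = t^{1-2s} u'` belongs to `W_s(V',H)` with weak derivative `w'` (in `V'`),
and `(t^{1-2s} u')' = t^{1-2s} 𝒜 u`, i.e. `w'(t) = t^{1-2s} E(u(t), ·)` a.e. -/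
def SHarmonic {V H : Type*} [NormedAddCommGroup V] [InnerProductSpace ℂ V]
    [NormedAddCommGroup H] [InnerProductSpace ℂ H]
    (j : V →L[ℂ] H) (e : H →L[ℂ] (V →L⋆[ℂ] ℂ)) (E : V → V → ℂ) (s : ℝ)
    (u : ℝ → V) (u' : ℝ → H) (w' : ℝ → (V →L⋆[ℂ] ℂ)) : Prop :=
  MemLp u 2 (wMeasure (2*(1-s)-1)) ∧
  MemLp u' 2 (wMeasure (2*(1-s)-1)) ∧
  WeakDeriv (fun t => j (u t)) u' ∧
  MemLp (fun t => t ^ (1-2*s) • u' t) 2 (wMeasure (2*s-1)) ∧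
  MemLp w' 2 (wMeasure (2*s-1)) ∧
  WeakDeriv (fun t => e (t ^ (1-2*s) • u' t)) w' ∧
  ∀ᵐ t ∂(volume.restrict (Set.Ioi 0)), ∀ v : V,
    w' t v = ((t ^ (1-2*s) : ℝ) : ℂ) * E (u t) v

/-- The hypotheses on the sesquilinear form `E : V × V → ℂ`: linear in the
first variable, antilinear in the second, continuous (bound `M`) and
coercive (constant `μ`). -/
structure IsCoerciveForm {V : Type*} [NormedAddCommGroup V] [InnerProductSpace ℂ V]
    (E : V → V → ℂ) (M μ : ℝ) : Prop where
  map_add₁ : ∀ u₁ u₂ v : V, E (u₁ + u₂) v = E u₁ v + E u₂ v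
  map_smul₁ : ∀ (c : ℂ) (u v : V), E (c • u) v = c * E u v
  map_add₂ : ∀ u v₁ v₂ : V, E u (v₁ + v₂) = E u v₁ + E u v₂
  map_smul₂ : ∀ (c : ℂ) (u v : V), E u (c • v) = starRingEnd ℂ c * E u v
  bound : ∀ u v : V, ‖E u v‖ ≤ M * ‖u‖ * ‖v‖
  coercive : ∀ u : V, μ * ‖u‖ ^ 2 ≤ (E u u).re
  pos : 0 < μ

/-! ### Auxiliary lemmas -/

lemma wMeasure_base_ac (γ : ℝ) : volume.restrict (Set.Ioi 0) ≪ wMeasure γ := by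
  apply withDensity_absolutelyContinuous'
  · exact (by fun_prop : Measurable fun t : ℝ => ENNReal.ofReal (t ^ γ)).aemeasurable
  · filter_upwards [ae_restrict_mem measurableSet_Ioi] with t ht
    simp only [ne_eq, ENNReal.ofReal_eq_zero, not_le]
    exact Real.rpow_pos_of_pos ht γ

lemma wMeasure_ac (γ : ℝ) : wMeasure γ ≪ volume.restrict (Set.Ioi 0) :=
  withDensity_absolutelyContinuous _ _

lemma memLp_restrict_compact {E : Type*} [NormedAddCommGroup E] {g : ℝ → E} {γ : ℝ}
    (hg : MemLp g 2 (wMeasure γ)) {K : Set ℝ} (hK : IsCompact K) (hKs : K ⊆ Set.Ioi 0) :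
    MemLp g 2 (volume.restrict K) := by
  rcases K.eq_empty_or_nonempty with rfl | hne
  · simp [MemLp, eLpNorm_measure_zero]
  set a := sInf K with ha_def
  set b := sSup K with hb_def
  have haK : a ∈ K := hK.sInf_mem hne
  have ha : 0 < a := hKs haK
  have hsub : K ⊆ Set.Icc a b := fun x hx =>
    ⟨csInf_le hK.isBounded.bddBelow hx, le_csSup hK.isBounded.bddAbove hx⟩
  set c : ℝ := min (a ^ γ) (b ^ γ) with hc_def
  have hc : 0 < c := lt_min (Real.rpow_pos_of_pos ha γ)
    (Real.rpow_pos_of_pos (ha.trans_le (hsub haK).2) γ)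
  have hbound : ∀ t ∈ K, c ≤ t ^ γ := by
    intro t ht
    rcases le_or_gt 0 γ with hγ | hγ
    · exact (min_le_left _ _).trans (Real.rpow_le_rpow ha.le (hsub ht).1 hγ)
    · exact (min_le_right _ _).trans (Real.rpow_le_rpow_of_nonpos (hKs ht) (hsub ht).2 hγ.le)
  have hKm : MeasurableSet K := hK.isClosed.measurableSet
  have h1 : MemLp g 2 ((wMeasure γ).restrict K) := hg.restrict K
  have h2 : (ENNReal.ofReal c) • (volume.restrict K) ≤ (wMeasure γ).restrict K := by
    rw [wMeasure, restrict_withDensity hKm, ← withDensity_const]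
    have : Measure.restrict (volume.restrict (Set.Ioi 0)) K = volume.restrict K := by
      rw [Measure.restrict_restrict hKm, Set.inter_eq_self_of_subset_left hKs]
    rw [← this]
    refine withDensity_mono ?_
    filter_upwards [ae_restrict_mem hKm] with t ht
    exact ENNReal.ofReal_le_ofReal (hbound t ht)
  have h3 : MemLp g 2 ((ENNReal.ofReal c) • (volume.restrict K)) := h1.mono_measure h2
  have h4 := h3.smul_measure (c := (ENNReal.ofReal c)⁻¹) (by simp [hc])
  rwa [smul_smul, ENNReal.inv_mul_cancel (by simp [hc]) ENNReal.ofReal_ne_top, one_smul] at h4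

lemma integrableOn_compact {E : Type*} [NormedAddCommGroup E] {g : ℝ → E} {γ : ℝ}
    (hg : MemLp g 2 (wMeasure γ)) {K : Set ℝ} (hK : IsCompact K) (hKs : K ⊆ Set.Ioi 0) :
    IntegrableOn g K volume := by
  have : IsFiniteMeasure (volume.restrict K) := ⟨by simpa using hK.measure_lt_top⟩
  exact (memLp_restrict_compact hg hK hKs).integrable (by norm_num)

lemma wMeasure_lintegral {g : ℝ → ℝ≥0∞} (γ : ℝ) (hg : AEMeasurable g (wMeasure γ)) :
    ∫⁻ t, g t ∂(wMeasure γ) = ∫⁻ t in Set.Ioi (0:ℝ), ENNReal.ofReal (t ^ γ) * g t := by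
  rw [wMeasure, lintegral_withDensity_eq_lintegral_mul₀' (by fun_prop) hg]
  rfl

lemma memLp_smul_rpow {E : Type*} [NormedAddCommGroup E] [NormedSpace ℝ E]
    {f : ℝ → E} {γ c : ℝ} (hf : MemLp f 2 (wMeasure γ)) :
    MemLp (fun t => t ^ c • f t) 2 (wMeasure (γ - 2*c)) := by
  have hmb : AEStronglyMeasurable f (volume.restrict (Set.Ioi 0)) :=
    hf.aestronglyMeasurable.mono_ac (wMeasure_base_ac γ)
  have hm' : AEStronglyMeasurable f (wMeasure (γ - 2*c)) :=
    hmb.mono_ac (wMeasure_ac _)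
  have hsm : AEStronglyMeasurable (fun t : ℝ => t ^ c • f t) (wMeasure (γ - 2*c)) :=
    ((measurable_id.pow_const c).aestronglyMeasurable).smul hm'
  refine ⟨hsm, ?_⟩
  rw [eLpNorm_lt_top_iff_lintegral_rpow_enorm_lt_top (by norm_num) (by norm_num)]
  have h2 : (2:ℝ≥0∞).toReal = (2:ℝ) := by norm_num
  rw [h2, wMeasure_lintegral _ (hsm.enorm.pow_const _)]
  have hfin := hf.2
  rw [eLpNorm_lt_top_iff_lintegral_rpow_enorm_lt_top (by norm_num) (by norm_num), h2,
    wMeasure_lintegral _ (hf.aestronglyMeasurable.enorm.pow_const _)] at hfin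
  refine lt_of_le_of_lt (le_of_eq (lintegral_congr_ae ?_)) hfin
  filter_upwards [ae_restrict_mem measurableSet_Ioi] with t ht
  have htp : (0:ℝ) < t := ht
  have h1 : ‖t ^ c • f t‖ₑ = ENNReal.ofReal (t ^ c) * ‖f t‖ₑ := by
    rw [enorm_smul]
    congr 1
    exact Real.enorm_eq_ofReal (Real.rpow_nonneg htp.le c)
  have h3 : ENNReal.ofReal (t ^ c) ^ (2:ℝ) = ENNReal.ofReal (t ^ (2*c)) := by
    rw [show (2*c) = c*2 by ring, Real.rpow_mul htp.le,
      ENNReal.ofReal_rpow_of_pos (Real.rpow_pos_of_pos htp c)]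
  rw [h1, ENNReal.mul_rpow_of_nonneg _ _ (by norm_num : (0:ℝ) ≤ 2), h3, ← mul_assoc,
    ← ENNReal.ofReal_mul (Real.rpow_nonneg htp.le _), ← Real.rpow_add htp]
  ring_nf

section ops
variable {V : Type*} [NormedAddCommGroup V] [InnerProductSpace ℂ V]

/-- Evaluation at `v` as a continuous linear map on the antidual. -/
def evalCLM (v : V) : (V →L⋆[ℂ] ℂ) →L[ℂ] ℂ :=
  LinearMap.mkContinuous
    { toFun := fun f => f v
      map_add' := fun f g => rfl
      map_smul' := fun c f => rfl }
    ‖v‖ (fun f => by simpa [mul_comm] using f.le_opNorm v)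

@[simp] lemma evalCLM_apply (v : V) (f : V →L⋆[ℂ] ℂ) : evalCLM v f = f v := rfl

/-- `E(x, ·)` as a continuous antilinear functional. -/
def Aop (E : V → V → ℂ) {M μ : ℝ} (hE : IsCoerciveForm E M μ) (x : V) : V →L⋆[ℂ] ℂ :=
  LinearMap.mkContinuous
    { toFun := fun v => E x v
      map_add' := hE.map_add₂ x
      map_smul' := fun c v => by simpa [smul_eq_mul] using hE.map_smul₂ c x v }
    (max M 0 * ‖x‖) (fun v => by
      refine (hE.bound x v).trans ?_
      have h1 : M * ‖x‖ * ‖v‖ ≤ max M 0 * ‖x‖ * ‖v‖ := by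
        have := mul_le_mul_of_nonneg_right (le_max_left M 0) (norm_nonneg x)
        nlinarith [norm_nonneg v]
      simpa using h1)

@[simp] lemma Aop_apply (E : V → V → ℂ) {M μ : ℝ} (hE : IsCoerciveForm E M μ) (x v : V) :
    Aop E hE x v = E x v := rfl

/-- The operator `𝒜 : V → V'` associated to the form `E`. -/
def Bop (E : V → V → ℂ) {M μ : ℝ} (hE : IsCoerciveForm E M μ) : V →L[ℂ] (V →L⋆[ℂ] ℂ) :=
  LinearMap.mkContinuous
    { toFun := fun x => Aop E hE x
      map_add' := fun x y => by ext v; simp [hE.map_add₁]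
      map_smul' := fun c x => by ext v; simp [hE.map_smul₁] }
    (max M 0) (fun x => by
      show ‖Aop E hE x‖ ≤ max M 0 * ‖x‖
      exact LinearMap.mkContinuous_norm_le _ (mul_nonneg (le_max_right M 0) (norm_nonneg x)) _)

@[simp] lemma Bop_apply (E : V → V → ℂ) {M μ : ℝ} (hE : IsCoerciveForm E M μ) (x v : V) :
    Bop E hE x v = E x v := rfl

end ops

set_option maxHeartbeats 1000000 in
/-- if `u ∈ W_{1-s}(H,V)` satisfies `b_s(u,v) = 0` for all test
functions `v ∈ C_c^∞((0,∞);V)`, where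
`b_s(u,v) = ∫₀^∞ (⟨u'(t),v'(t)⟩_H + E(u(t),v(t))) t^{1-2s} dt`,
then `u` is `s`-harmonic. -/
theorem test_functions_imply_sharmonic
    {V H : Type*} [NormedAddCommGroup V] [InnerProductSpace ℂ V] [CompleteSpace V]
    [NormedAddCommGroup H] [InnerProductSpace ℂ H] [CompleteSpace H]
    (j : V →L[ℂ] H) (hj : Function.Injective j) (hjd : DenseRange j)
    (e : H →L[ℂ] (V →L⋆[ℂ] ℂ)) (he : ∀ (h : H) (v : V), e h v = inner ℂ (j v) h)
    (E : V → V → ℂ) (M μ : ℝ) (hE : IsCoerciveForm E M μ)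
    (s : ℝ) (hs : s ∈ Ioo (0:ℝ) 1)
    (u : ℝ → V) (u' : ℝ → H)
    (hu : MemLp u 2 (wMeasure (2*(1-s)-1)))
    (hu' : MemLp u' 2 (wMeasure (2*(1-s)-1)))
    (hud : WeakDeriv (fun t => j (u t)) u')
    (hb : ∀ v : ℝ → V, ContDiff ℝ (⊤ : ℕ∞) v → HasCompactSupport v → tsupport v ⊆ Ioi 0 →
      ∫ t in Ioi (0:ℝ),
        ((inner ℂ (j (deriv v t)) (u' t) : ℂ) + E (u t) (v t)) * ((t ^ (1-2*s) : ℝ) : ℂ)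
        = 0) :
    ∃ w' : ℝ → (V →L⋆[ℂ] ℂ), SHarmonic j e E s u u' w' := by
  have hexp : (2*(1-s)-1) - 2*(1-2*s) = 2*s-1 := by ring
  refine ⟨fun t => (t ^ (1-2*s) : ℝ) • (Bop E hE (u t)), hu, hu', hud, ?_, ?_, ?_, ?_⟩
  · have h := memLp_smul_rpow (c := 1-2*s) hu'
    rwa [hexp] at h
  · have h0 : MemLp (fun t => Bop E hE (u t)) 2 (wMeasure (2*(1-s)-1)) :=
      (Bop E hE).comp_memLp' hu
    have h := memLp_smul_rpow (c := 1-2*s) h0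
    rwa [hexp] at h
  · intro φ hφ hφc hφs
    set K := tsupport φ with hKdef
    have hKc : IsCompact K := hφc
    have hKm : MeasurableSet K := hKc.isClosed.measurableSet
    have hKs : K ⊆ Ioi 0 := hφs
    have hdc : Continuous (deriv φ) := hφ.continuous_deriv (by simp)
    have hrc : ContinuousOn (fun t : ℝ => t ^ (1-2*s)) K := fun t ht =>
      (Real.continuousAt_rpow_const t (1-2*s) (Or.inl (ne_of_gt (hKs ht)))).continuousWithinAt
    obtain ⟨C₁, hC₁⟩ := hKc.exists_bound_of_continuousOn hdc.continuousOn
    obtain ⟨C₂, hC₂⟩ := hKc.exists_bound_of_continuousOn hrc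
    obtain ⟨C₃, hC₃⟩ := hKc.exists_bound_of_continuousOn hφ.continuous.continuousOn
    set ψ₁ : ℝ → ℝ := fun t => deriv φ t * t ^ (1-2*s) with hψ₁
    set ψ₂ : ℝ → ℝ := fun t => φ t * t ^ (1-2*s) with hψ₂
    have hF : Integrable (fun t => deriv φ t • e ((t:ℝ) ^ (1-2*s) • u' t))
        (volume.restrict (Ioi 0)) := by
      have heq : (fun t => deriv φ t • e ((t:ℝ) ^ (1-2*s) • u' t))
          = fun t => ψ₁ t • e (u' t) := by
        funext t
        rw [e.map_smul_of_tower, smul_smul]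
      rw [heq]
      have h1 : IntegrableOn (fun t => e (u' t)) K volume :=
        e.integrable_comp (integrableOn_compact hu' hKc hKs)
      have h2 : IntegrableOn (fun t => ψ₁ t • e (u' t)) K volume := by
        refine Integrable.mono' ((h1.norm).const_mul (C₁ * C₂)) ?_ ?_
        · exact ((hdc.measurable.mul (measurable_id.pow_const (1-2*s))).aestronglyMeasurable).smul
            h1.aestronglyMeasurable
        · filter_upwards [ae_restrict_mem hKm] with t ht
          rw [norm_smul (ψ₁ t) (e (u' t))]
          have hb1 : ‖ψ₁ t‖ ≤ C₁ * C₂ := by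
            rw [hψ₁]
            calc ‖deriv φ t * t ^ (1-2*s)‖ = ‖deriv φ t‖ * ‖t ^ (1-2*s)‖ := norm_mul _ _
              _ ≤ C₁ * C₂ := mul_le_mul (hC₁ t ht) (hC₂ t ht) (norm_nonneg _)
                  ((norm_nonneg _).trans (hC₁ t ht))
          exact mul_le_mul_of_nonneg_right hb1 (norm_nonneg _)
      have hsupp : Function.support (fun t => ψ₁ t • e (u' t)) ⊆ K := by
        intro t ht
        by_contra htK
        apply ht
        have h0 : deriv φ t = 0 :=
          image_eq_zero_of_notMem_tsupport
            (fun h => htK (closure_minimal support_deriv_subset (isClosed_tsupport φ) h))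
        simp only [hψ₁, h0, zero_mul]
        refine ContinuousLinearMap.ext fun w => ?_
        rw [ContinuousLinearMap.smul_apply]
        simp
      exact ((integrableOn_iff_integrable_of_support_subset (ε' := V →L⋆[ℂ] ℂ) hsupp).mp h2).integrableOn
    have hG : Integrable (fun t => φ t • ((t:ℝ) ^ (1-2*s) • Bop E hE (u t)))
        (volume.restrict (Ioi 0)) := by
      have heq : (fun t => φ t • ((t:ℝ) ^ (1-2*s) • Bop E hE (u t)))
          = fun t => ψ₂ t • Bop E hE (u t) := by
        funext t
        rw [smul_smul]
      rw [heq]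
      have h1 : IntegrableOn (fun t => Bop E hE (u t)) K volume :=
        (Bop E hE).integrable_comp (integrableOn_compact hu hKc hKs)
      have h2 : IntegrableOn (fun t => ψ₂ t • Bop E hE (u t)) K volume := by
        refine Integrable.mono' ((h1.norm).const_mul (C₃ * C₂)) ?_ ?_
        · exact ((hφ.continuous.measurable.mul (measurable_id.pow_const (1-2*s))).aestronglyMeasurable).smul
            h1.aestronglyMeasurable
        · filter_upwards [ae_restrict_mem hKm] with t ht
          rw [norm_smul (ψ₂ t) (Bop E hE (u t))]
          have hb1 : ‖ψ₂ t‖ ≤ C₃ * C₂ := by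
            rw [hψ₂]
            calc ‖φ t * t ^ (1-2*s)‖ = ‖φ t‖ * ‖t ^ (1-2*s)‖ := norm_mul _ _
              _ ≤ C₃ * C₂ := mul_le_mul (hC₃ t ht) (hC₂ t ht) (norm_nonneg _)
                  ((norm_nonneg _).trans (hC₃ t ht))
          exact mul_le_mul_of_nonneg_right hb1 (norm_nonneg _)
      have hsupp : Function.support (fun t => ψ₂ t • Bop E hE (u t)) ⊆ K := by
        intro t ht
        by_contra htK
        apply ht
        have h0 : φ t = 0 := image_eq_zero_of_notMem_tsupport htK
        simp only [hψ₂, h0, zero_mul]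
        refine ContinuousLinearMap.ext fun w => ?_
        rw [ContinuousLinearMap.smul_apply]
        simp
      exact ((integrableOn_iff_integrable_of_support_subset (ε' := V →L⋆[ℂ] ℂ) hsupp).mp h2).integrableOn
    rw [eq_neg_iff_add_eq_zero, ← integral_add hF hG]
    refine ContinuousLinearMap.ext fun v => ?_
    have hv1 : ContDiff ℝ (⊤ : ℕ∞) (fun t : ℝ => φ t • v) := hφ.smul contDiff_const
    have hv2 : HasCompactSupport (fun t : ℝ => φ t • v) := hφc.smul_right
    have hv3 : tsupport (fun t : ℝ => φ t • v) ⊆ Ioi 0 :=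
      (closure_mono (Function.support_smul_subset_left φ _)).trans hφs
    have hval : ∫ t in Ioi (0:ℝ), evalCLM v (deriv φ t • e ((t:ℝ) ^ (1-2*s) • u' t)
          + φ t • ((t:ℝ) ^ (1-2*s) • Bop E hE (u t)))
        = evalCLM v (∫ t in Ioi (0:ℝ), (deriv φ t • e ((t:ℝ) ^ (1-2*s) • u' t)
          + φ t • ((t:ℝ) ^ (1-2*s) • Bop E hE (u t)))) := by
      simpa using (evalCLM v).integral_comp_comm (μ := volume.restrict (Ioi 0)) (hF.add hG)
    have hzero : ((0 : V →L⋆[ℂ] ℂ)) v = 0 := rfl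
    show evalCLM v (∫ t in Ioi (0:ℝ),
      (deriv φ t • e ((t:ℝ) ^ (1-2*s) • u' t) + φ t • ((t:ℝ) ^ (1-2*s) • Bop E hE (u t)))) = _
    rw [← hval, hzero]
    refine Eq.trans ?_ (hb (fun t => φ t • v) hv1 hv2 hv3)
    refine integral_congr_ae (Eventually.of_forall fun t => ?_)
    beta_reduce
    have hderiv : deriv (fun t : ℝ => φ t • v) t = deriv φ t • v :=
      deriv_smul_const ((hφ.differentiable (by simp)).differentiableAt) v
    have h1 : e ((t:ℝ) ^ (1-2*s) • u' t) v = ((t ^ (1-2*s) : ℝ) : ℂ) * inner ℂ (j v) (u' t) := by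
      rw [he]
      have hcs : ((t ^ (1-2*s) : ℝ)) • u' t = ((t ^ (1-2*s) : ℝ) : ℂ) • u' t :=
        (Complex.coe_smul _ _).symm
      rw [hcs, inner_smul_right]
    have h2 : (inner ℂ (j (deriv (fun t : ℝ => φ t • v) t)) (u' t) : ℂ)
        = ((deriv φ t : ℝ) : ℂ) * inner ℂ (j v) (u' t) := by
      rw [hderiv, j.map_smul_of_tower]
      have hcs : (deriv φ t) • j v = ((deriv φ t : ℝ) : ℂ) • j v := (Complex.coe_smul _ _).symm
      rw [hcs, inner_smul_left, Complex.conj_ofReal]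
    have h3 : E (u t) (φ t • v) = ((φ t : ℝ) : ℂ) * E (u t) v := by
      have hcs : (φ t) • v = ((φ t : ℝ) : ℂ) • v := (Complex.coe_smul _ _).symm
      rw [hcs, hE.map_smul₂, Complex.conj_ofReal]
    have h4 : evalCLM v (deriv φ t • e ((t:ℝ) ^ (1-2*s) • u' t)
          + φ t • ((t:ℝ) ^ (1-2*s) • Bop E hE (u t)))
        = ((deriv φ t : ℝ) : ℂ) * (((t ^ (1-2*s) : ℝ)) : ℂ) * inner ℂ (j v) (u' t)
          + ((φ t : ℝ) : ℂ) * (((t ^ (1-2*s) : ℝ)) : ℂ) * E (u t) v := by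
      simp only [evalCLM_apply, ContinuousLinearMap.add_apply, ContinuousLinearMap.smul_apply,
        Bop_apply, h1]
      simp only [Complex.real_smul]
      ring
    rw [h4, h2, h3]
    ring
  · exact ae_of_all _ (fun t v => by
      simp [ContinuousLinearMap.smul_apply, Complex.real_smul])
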